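/- Let A, B ⊆ R² be closed convex cones and suppose Ker T_DR = {x : T_DR(x) = 0} is a line through the origin. Then either (A = {0} and B = Ker T_DR), or (A = (Ker T_DR)^⊥ and B = R²), or (A = R² and B = (Ker T_DR)^⊥), or (A = Ker T_DR and B = {0}). Consequently Fix T_DR ≠ {0} and T_DR(R²) ⊆ Fix T_DR. -/

import Mathlib

/-!
For a convex cone `K` with nearest-point map `P`, `x = P x + (x - P x)` splits `x` into orthogonal
parts in `K` and in the polar cone `K°` (Moreau). Hence `T_DR x = 0` exactly when `x = p + q` with
`p ∈ A ∩ B°` and `q ∈ A° ∩ (-B)`, two mutually orthogonal cones; if their sum is the line `ℝ v`,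
one of them is that line and the other is `{0}`. When `A ∩ B° = ℝ v`, both `B` and `A°` lie in
`v^⊥`, a line of the plane, and a point `y` of a line through `0` with `y - P_K y` on the same line
lies in `K` or in `K°`; this leaves `B = {0}, A = ℝ v` or `B = v^⊥, A = ℝ²`. In all four cases `A`
and `B` are subspaces and `T_DR` is the orthogonal projection onto `v^⊥`.
-/

open RealInnerProductSpace Pointwise Module

variable {F : Type*} [NormedAddCommGroup F] [InnerProductSpace ℝ F]

def IsNearestPointMap (K : Set F) (P : F → F) : Prop :=
  ∀ x, P x ∈ K ∧ ∀ w ∈ K, ‖x - P x‖ ≤ ‖x - w‖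

def polarCone (K : Set F) : Set F := {y | ∀ w ∈ K, ⟪w, y⟫ ≤ 0}

noncomputable def douglasRachford (PA PB : F → F) (x : F) : F :=
  (1 / 2 : ℝ) • (x + ((2 : ℝ) • PB ((2 : ℝ) • PA x - x) - ((2 : ℝ) • PA x - x)))

lemma douglasRachford_apply (PA PB : F → F) (x : F) :
    douglasRachford PA PB x = PB ((2 : ℝ) • PA x - x) - (PA x - x) := by
  unfold douglasRachford
  module

lemma IsNearestPointMap.neg {E : Type*} [NormedAddCommGroup E] {K : Set E} {P : E → E}
    (hP : IsNearestPointMap K P) : IsNearestPointMap (-K) (fun x => -P (-x)) := by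
  intro x
  refine ⟨by simpa using (hP (-x)).1, fun w hw => ?_⟩
  calc ‖x - -P (-x)‖ = ‖-x - P (-x)‖ := by rw [← norm_neg]; congr 1; abel
    _ ≤ ‖-x - -w‖ := (hP (-x)).2 (-w) hw
    _ = ‖x - w‖ := by rw [← norm_neg]; congr 1; abel

lemma subset_polarCone_polarCone (K : Set F) : K ⊆ polarCone (polarCone K) :=
  fun x hx _ hy => real_inner_comm x _ ▸ hy x hx

lemma polarCone_neg (K : Set F) : polarCone (-K) = -polarCone K := by
  ext y
  constructor
  · intro h w hw
    simpa [inner_neg_left, inner_neg_right] using h (-w) (by simpa using hw)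
  · intro h w hw
    simpa [inner_neg_left, inner_neg_right] using h (-w) hw

lemma polarCone_subset_orthogonal {K : Set F} {v : F} (hv : v ∈ K) (hnv : -v ∈ K) :
    polarCone K ⊆ (ℝ ∙ v)ᗮ := fun y hy => by
  have h₁ := hy v hv
  have h₂ := hy (-v) hnv
  rw [inner_neg_left] at h₂
  exact Submodule.mem_orthogonal_singleton_iff_inner_right.2 (by linarith)

lemma inner_eq_zero_of_mem_inter_polarCone {A B : Set F} {p q : F}
    (hp : p ∈ A ∩ polarCone B) (hq : q ∈ polarCone A ∩ -B) : ⟪p, q⟫ = 0 := by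
  have h₁ : ⟪p, q⟫ ≤ 0 := hq.1 p hp.1
  have h₂ : ⟪-q, p⟫ ≤ 0 := hp.2 (-q) hq.2
  rw [inner_neg_left, real_inner_comm] at h₂
  linarith

namespace IsNearestPointMap

variable {K : Set F} {P : F → F}

lemma inner_sub_le (hP : IsNearestPointMap K P) (hK : Convex ℝ K) (x : F) :
    ∀ w ∈ K, ⟪x - P x, w - P x⟫ ≤ 0 := by
  have : Nonempty K := ⟨⟨P x, (hP x).1⟩⟩
  refine (norm_eq_iInf_iff_real_inner_le_zero hK (hP x).1).1
    (le_antisymm (le_ciInf fun w => (hP x).2 w w.2) ?_)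
  exact ciInf_le (f := fun w : K => ‖x - w‖) ⟨0, by rintro _ ⟨w, rfl⟩; exact norm_nonneg _⟩
    ⟨P x, (hP x).1⟩

lemma apply_eq_of_inner_sub_le (hP : IsNearestPointMap K P) (hK : Convex ℝ K) {x p : F}
    (hp : p ∈ K) (h : ∀ w ∈ K, ⟪x - p, w - p⟫ ≤ 0) : P x = p := by
  have h₁ := hP.inner_sub_le hK x p hp
  have h₂ := h (P x) (hP x).1
  have e : ⟪P x - p, P x - p⟫ = ⟪x - p, P x - p⟫ + ⟪x - P x, p - P x⟫ := by
    simp only [inner_sub_left, inner_sub_right]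
    ring
  exact sub_eq_zero.1 (real_inner_self_nonpos.1 (by linarith))

lemma eq_starProjection {U : Submodule ℝ F} [U.HasOrthogonalProjection]
    (hP : IsNearestPointMap (U : Set F) P) : P = U.starProjection := by
  funext x
  refine hP.apply_eq_of_inner_sub_le U.convex (U.starProjection_apply_mem x) fun w hw => ?_
  rw [Submodule.inner_left_of_mem_orthogonal (U.sub_mem hw (U.starProjection_apply_mem x))
    (Submodule.sub_starProjection_mem_orthogonal x)]

lemma apply_eq_of_sub_mem_polarCone (hP : IsNearestPointMap K P) (hK : Convex ℝ K) {x p : F}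
    (hp : p ∈ K) (hq : x - p ∈ polarCone K) (horth : ⟪x - p, p⟫ = 0) : P x = p :=
  hP.apply_eq_of_inner_sub_le hK hp fun w hw => by
    rw [inner_sub_right, horth, sub_zero, real_inner_comm]
    exact hq w hw

variable (hP : IsNearestPointMap K P) (hcone : ∀ x ∈ K, ∀ t : ℝ, 0 < t → t • x ∈ K)
include hP hcone

lemma zero_mem : (0 : F) ∈ K := by
  have h := (hP 0).2 ((1 / 2 : ℝ) • P 0) (hcone _ (hP 0).1 _ (by norm_num))
  rw [zero_sub, zero_sub, norm_neg, norm_neg, norm_smul] at h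
  have : ‖P 0‖ = 0 := by norm_num at h; linarith [norm_nonneg (P 0)]
  simpa [norm_eq_zero.1 this] using (hP 0).1

variable (hK : Convex ℝ K)
include hK

lemma inner_sub_apply_apply_eq_zero (x : F) : ⟪x - P x, P x⟫ = 0 := by
  have h₂ := hP.inner_sub_le hK x _ (hcone _ (hP x).1 2 two_pos)
  have h₁ := hP.inner_sub_le hK x _ (hcone _ (hP x).1 (1 / 2) (by norm_num))
  rw [show (2 : ℝ) • P x - P x = P x by module] at h₂
  rw [show (1 / 2 : ℝ) • P x - P x = (-(1 / 2) : ℝ) • P x by module,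
    real_inner_smul_right] at h₁
  linarith

lemma sub_apply_mem_polarCone (x : F) : x - P x ∈ polarCone K := fun w hw => by
  have h := hP.inner_sub_le hK x w hw
  rwa [inner_sub_right, hP.inner_sub_apply_apply_eq_zero hcone hK x, sub_zero,
    real_inner_comm] at h

lemma mem_or_mem_polarCone_of_sub_mem_span {x : F} (hx : x - P x ∈ ℝ ∙ x) :
    x ∈ K ∨ x ∈ polarCone K := by
  obtain ⟨c, hc⟩ := Submodule.mem_span_singleton.1 hx
  have hPx : P x = (1 - c) • x := by rw [sub_smul, one_smul, hc]; abel
  have h := hP.inner_sub_apply_apply_eq_zero hcone hK x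
  rw [← hc, hPx, real_inner_smul_left, real_inner_smul_right] at h
  rcases mul_eq_zero.1 h with hc0 | h
  · left
    have h := (hP x).1
    rwa [hPx, hc0, sub_zero, one_smul] at h
  rcases mul_eq_zero.1 h with hc1 | hxx
  · right
    have h := hP.sub_apply_mem_polarCone hcone hK x
    rwa [hPx, show c = 1 by linarith, sub_self, zero_smul, sub_zero] at h
  · left
    simpa [inner_self_eq_zero.1 hxx] using hP.zero_mem hcone

end IsNearestPointMap

lemma smul_mem_of_neg_mem {K : Set F} (h0 : (0 : F) ∈ K)
    (hcone : ∀ x ∈ K, ∀ t : ℝ, 0 < t → t • x ∈ K) {x : F} (hx : x ∈ K) (hnx : -x ∈ K)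
    (c : ℝ) : c • x ∈ K := by
  rcases lt_trichotomy c 0 with hc | rfl | hc
  · simpa using hcone _ hnx (-c) (neg_pos.2 hc)
  · simpa using h0
  · exact hcone x hx c hc

section DouglasRachford

variable {A B : Set F} {PA PB : F → F}
  (hPA : IsNearestPointMap A PA) (hA : Convex ℝ A) (hAcone : ∀ x ∈ A, ∀ t : ℝ, 0 < t → t • x ∈ A)
  (hPB : IsNearestPointMap B PB) (hB : Convex ℝ B) (hBcone : ∀ x ∈ B, ∀ t : ℝ, 0 < t → t • x ∈ B)
include hPA hA hAcone hPB hB hBcone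

theorem setOf_douglasRachford_eq_zero :
    {x | douglasRachford PA PB x = 0} = (A ∩ polarCone B) + (polarCone A ∩ -B) := by
  ext x
  simp only [Set.mem_ofPred_eq, Set.mem_add, douglasRachford_apply, sub_eq_zero]
  constructor
  · intro hx
    have hp : x - PA x ∈ polarCone A := hPA.sub_apply_mem_polarCone hAcone hA x
    have hq := hPB.sub_apply_mem_polarCone hBcone hB ((2 : ℝ) • PA x - x)
    rw [hx, show (2 : ℝ) • PA x - x - (PA x - x) = PA x by module] at hq
    refine ⟨PA x, ⟨(hPA x).1, hq⟩, x - PA x, ⟨hp, ?_⟩, add_sub_cancel _ _⟩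
    simpa [hx] using (hPB ((2 : ℝ) • PA x - x)).1
  · rintro ⟨p, hp, q, hq, rfl⟩
    have horth := inner_eq_zero_of_mem_inter_polarCone hp hq
    have hPAx : PA (p + q) = p := hPA.apply_eq_of_sub_mem_polarCone hA hp.1
      (by simpa using hq.1) (by simpa [real_inner_comm] using horth)
    have hPBx : PB (p - q) = -q := hPB.apply_eq_of_sub_mem_polarCone hB hq.2
      (by simpa using hp.2) (by simpa [inner_neg_right] using horth)
    rw [hPAx, show (2 : ℝ) • p - (p + q) = p - q by module, hPBx]
    abel

end DouglasRachford

theorem eq_span_and_eq_zero_or_of_add_eq_span {S₁ S₂ : Set F} {v : F} (h₁ : (0 : F) ∈ S₁)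
    (h₂ : (0 : F) ∈ S₂) (horth : ∀ p ∈ S₁, ∀ q ∈ S₂, ⟪p, q⟫ = 0)
    (hadd : S₁ + S₂ = (ℝ ∙ v : Set F)) :
    (S₁ = (ℝ ∙ v : Set F) ∧ S₂ = {0}) ∨ (S₁ = {0} ∧ S₂ = (ℝ ∙ v : Set F)) := by
  have hS₁ : S₁ ⊆ ℝ ∙ v := fun p hp => by simpa [← hadd] using Set.add_mem_add hp h₂
  have hS₂ : S₂ ⊆ ℝ ∙ v := fun q hq => by simpa [← hadd] using Set.add_mem_add h₁ hq
  have hzero : (∀ p ∈ S₁, p = 0) ∨ ∀ q ∈ S₂, q = 0 := by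
    by_contra! ⟨⟨p, hp, hp0⟩, ⟨q, hq, hq0⟩⟩
    obtain ⟨a, rfl⟩ := Submodule.mem_span_singleton.1 (hS₁ hp)
    obtain ⟨b, rfl⟩ := Submodule.mem_span_singleton.1 (hS₂ hq)
    have h := horth _ hp _ hq
    simp only [ne_eq, smul_eq_zero, not_or] at hp0 hq0
    simp [real_inner_smul_left, real_inner_smul_right, hp0.1, hq0.1, hp0.2] at h
  rcases hzero with h | h
  · right
    have hS₁0 : S₁ = {0} := Set.eq_singleton_iff_unique_mem.2 ⟨h₁, h⟩
    refine ⟨hS₁0, ?_⟩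
    simpa [hS₁0] using hadd
  · left
    have hS₂0 : S₂ = {0} := Set.eq_singleton_iff_unique_mem.2 ⟨h₂, h⟩
    refine ⟨?_, hS₂0⟩
    simpa [hS₂0] using hadd

section Plane

variable [Fact (finrank ℝ F = 2)]

lemma IsNearestPointMap.mem_or_mem_polarCone_of_mem_orthogonal {K : Set F} {P : F → F}
    (hP : IsNearestPointMap K P) (hcone : ∀ x ∈ K, ∀ t : ℝ, 0 < t → t • x ∈ K)
    (hK : Convex ℝ K) {v y : F} (hv : v ≠ 0) (hy : y ∈ (ℝ ∙ v)ᗮ)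
    (hPy : y - P y ∈ (ℝ ∙ v)ᗮ) : y ∈ K ∨ y ∈ polarCone K := by
  by_cases hy0 : y = 0
  · exact Or.inl (hy0 ▸ hP.zero_mem hcone)
  refine hP.mem_or_mem_polarCone_of_sub_mem_span hcone hK ?_
  rw [Submodule.mem_orthogonal_singleton_iff_inner_right] at hy hPy
  exact Submodule.mem_span_singleton_of_inner_eq_zero_of_inner_eq_zero hv hy0 hPy hy

theorem cones_eq_of_inter_polarCone_eq_span {A B : Set F} {PA PB : F → F}
    (hPA : IsNearestPointMap A PA) (hA : Convex ℝ A)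
    (hAcone : ∀ x ∈ A, ∀ t : ℝ, 0 < t → t • x ∈ A)
    (hPB : IsNearestPointMap B PB) (hB : Convex ℝ B)
    (hBcone : ∀ x ∈ B, ∀ t : ℝ, 0 < t → t • x ∈ B) {v : F} (hv : v ≠ 0)
    (h₁ : A ∩ polarCone B = (ℝ ∙ v : Set F)) (h₂ : polarCone A ∩ -B = {0}) :
    (A = (ℝ ∙ v : Set F) ∧ B = {0}) ∨ (A = Set.univ ∧ B = ((ℝ ∙ v)ᗮ : Set F)) := by
  set L := ℝ ∙ v
  have hL (t : ℝ) : t • v ∈ A ∩ polarCone B :=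
    h₁ ▸ L.smul_mem t (Submodule.mem_span_singleton_self v)
  have hA_perp : polarCone A ⊆ Lᗮ :=
    polarCone_subset_orthogonal (by simpa using (hL 1).1) (by simpa using (hL (-1)).1)
  have hB_perp : B ⊆ Lᗮ := (subset_polarCone_polarCone B).trans
    (polarCone_subset_orthogonal (by simpa using (hL 1).2) (by simpa using (hL (-1)).2))
  have hpolar_zero (y : F) (hy : y ∈ polarCone A) (hyB : -y ∈ B) : y = 0 := by
    simpa using h₂.subset ⟨hy, hyB⟩
  by_cases hBz : B ⊆ {0}
  · left
    have hB0 : B = {0} :=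
      hBz.antisymm (Set.singleton_subset_iff.2 (hPB.zero_mem hBcone))
    refine ⟨?_, hB0⟩
    simpa [hB0, polarCone] using h₁
  right
  obtain ⟨b, hb, hb0⟩ := Set.not_subset.1 hBz
  rw [Set.mem_singleton_iff] at hb0
  have hnb : -b ∈ Lᗮ := Lᗮ.neg_mem (hB_perp hb)
  have hnbA : -b ∈ A := by
    rcases hPA.mem_or_mem_polarCone_of_mem_orthogonal hAcone hA hv hnb
      (hA_perp (hPA.sub_apply_mem_polarCone hAcone hA _)) with h | h
    · exact h
    · exact absurd (neg_eq_zero.1 (hpolar_zero _ h (by simpa using hb))) hb0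
  have hnbB : -b ∈ B := by
    rcases hPB.mem_or_mem_polarCone_of_mem_orthogonal hBcone hB hv hnb
      (Lᗮ.sub_mem hnb (hB_perp (hPB _).1)) with h | h
    · exact h
    · have hbot : -b ∈ L ⊓ Lᗮ := ⟨h₁ ▸ ⟨hnbA, h⟩, hnb⟩
      rw [L.inf_orthogonal_eq_bot, Submodule.mem_bot, neg_eq_zero] at hbot
      exact absurd hbot hb0
  have hBL : B = Lᗮ := by
    refine hB_perp.antisymm fun y hy => ?_
    obtain ⟨c, rfl⟩ := Submodule.mem_span_singleton.1
      (Submodule.mem_span_singleton_of_inner_eq_zero_of_inner_eq_zero hv hb0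
        (Submodule.mem_orthogonal_singleton_iff_inner_right.1 hy)
        (Submodule.mem_orthogonal_singleton_iff_inner_right.1 (hB_perp hb)))
    exact smul_mem_of_neg_mem (hPB.zero_mem hBcone) hBcone hb hnbB c
  refine ⟨Set.eq_univ_of_forall fun x => ?_, hBL⟩
  have hq := hPA.sub_apply_mem_polarCone hAcone hA x
  have hx : x - PA x = 0 := hpolar_zero _ hq (hBL ▸ Lᗮ.neg_mem (hA_perp hq))
  rw [sub_eq_zero.1 hx]
  exact (hPA x).1

lemma exists_ne_zero_mem_orthogonal_span_singleton {v : F} (hv : v ≠ 0) :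
    ∃ w ∈ (ℝ ∙ v)ᗮ, w ≠ 0 :=
  Submodule.exists_mem_ne_zero_of_ne_bot fun h => by
    have hrank := Submodule.finrank_orthogonal_span_singleton (𝕜 := ℝ) (n := 1) hv
    rw [h, finrank_bot] at hrank
    exact zero_ne_one hrank

theorem cones_eq_of_setOf_douglasRachford_eq_zero {A B : Set F} {PA PB : F → F}
    (hPA : IsNearestPointMap A PA) (hA : Convex ℝ A)
    (hAcone : ∀ x ∈ A, ∀ t : ℝ, 0 < t → t • x ∈ A)
    (hPB : IsNearestPointMap B PB) (hB : Convex ℝ B)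
    (hBcone : ∀ x ∈ B, ∀ t : ℝ, 0 < t → t • x ∈ B) {v : F} (hv : v ≠ 0)
    (hker : {x | douglasRachford PA PB x = 0} = (ℝ ∙ v : Set F)) :
    (A = {0} ∧ B = (ℝ ∙ v : Set F)) ∨ (A = ((ℝ ∙ v)ᗮ : Set F) ∧ B = Set.univ) ∨
      (A = Set.univ ∧ B = ((ℝ ∙ v)ᗮ : Set F)) ∨ (A = (ℝ ∙ v : Set F) ∧ B = {0}) := by
  rw [setOf_douglasRachford_eq_zero hPA hA hAcone hPB hB hBcone] at hker
  have h0₁ : 0 ∈ A ∩ polarCone B := ⟨hPA.zero_mem hAcone, by simp [polarCone]⟩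
  have h0₂ : 0 ∈ polarCone A ∩ -B := ⟨by simp [polarCone], by simpa using hPB.zero_mem hBcone⟩
  rcases eq_span_and_eq_zero_or_of_add_eq_span h0₁ h0₂
    (fun p hp q hq => inner_eq_zero_of_mem_inter_polarCone hp hq) hker with ⟨h₁, h₂⟩ | ⟨h₁, h₂⟩
  · rcases cones_eq_of_inter_polarCone_eq_span hPA hA hAcone hPB hB hBcone hv h₁ h₂ with h | h
    exacts [Or.inr (Or.inr (Or.inr h)), Or.inr (Or.inr (Or.inl h))]
  -- `(A, B) ↦ (-B, A)` exchanges `A ∩ B°` and `A° ∩ (-B)`, up to sign.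
  have hBneg_cone : ∀ x ∈ -B, ∀ t : ℝ, 0 < t → t • x ∈ -B := fun x hx t ht => by
    simpa using hBcone _ hx t ht
  rcases cones_eq_of_inter_polarCone_eq_span hPB.neg hB.neg hBneg_cone hPA hA hAcone hv
      (by rwa [Set.inter_comm])
      (by rw [polarCone_neg, ← Set.inter_neg, Set.inter_comm, h₁, Set.neg_singleton, neg_zero])
    with ⟨hB', hA'⟩ | ⟨hB', hA'⟩
  · exact Or.inl ⟨hA', by rw [← neg_neg B, hB', Submodule.neg_coe]⟩
  · exact Or.inr (Or.inl ⟨hA', by rw [← neg_neg B, hB', Set.neg_univ]⟩)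

end Plane

theorem douglasRachford_eq_starProjection_orthogonal {A B : Set F} {PA PB : F → F}
    (hPA : IsNearestPointMap A PA) (hPB : IsNearestPointMap B PB) {v : F}
    (h : (A = {0} ∧ B = (ℝ ∙ v : Set F)) ∨ (A = ((ℝ ∙ v)ᗮ : Set F) ∧ B = Set.univ) ∨
      (A = Set.univ ∧ B = ((ℝ ∙ v)ᗮ : Set F)) ∨ (A = (ℝ ∙ v : Set F) ∧ B = {0})) :
    douglasRachford PA PB = (ℝ ∙ v)ᗮ.starProjection := by
  funext x
  rw [← Submodule.bot_coe (R := ℝ), ← Submodule.top_coe (R := ℝ)] at h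
  rcases h with ⟨rfl, rfl⟩ | ⟨rfl, rfl⟩ | ⟨rfl, rfl⟩ | ⟨rfl, rfl⟩ <;>
  · simp only [douglasRachford_apply, hPA.eq_starProjection, hPB.eq_starProjection,
      Submodule.starProjection_orthogonal', Submodule.starProjection_bot,
      Submodule.starProjection_top, sub_apply, one_apply_eq_self, ContinuousLinearMap.id_apply,
      zero_apply, smul_zero, map_zero, map_sub, map_smul]
    module

theorem stmt17_general (A B : Set (EuclideanSpace ℝ (Fin 2)))
    (hAconv : Convex ℝ A)
    (hBconv : Convex ℝ B)
    (hAcone : ∀ x ∈ A, ∀ t : ℝ, 0 < t → t • x ∈ A)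
    (hBcone : ∀ x ∈ B, ∀ t : ℝ, 0 < t → t • x ∈ B)
    (PA PB T : EuclideanSpace ℝ (Fin 2) → EuclideanSpace ℝ (Fin 2))
    (hPA : ∀ x, PA x ∈ A ∧ ∀ w ∈ A, ‖x - PA x‖ ≤ ‖x - w‖)
    (hPB : ∀ x, PB x ∈ B ∧ ∀ w ∈ B, ‖x - PB x‖ ≤ ‖x - w‖)
    (hT : ∀ x, T x = (1 / 2 : ℝ) •
      (x + ((2 : ℝ) • PB ((2 : ℝ) • PA x - x) - ((2 : ℝ) • PA x - x))))
    (v : EuclideanSpace ℝ (Fin 2)) (hv : v ≠ 0)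
    (hker : {x | T x = 0} = {x | ∃ t : ℝ, x = t • v}) :
    ((A = {0} ∧ B = {x | ∃ t : ℝ, x = t • v}) ∨
     (A = {y | inner ℝ v y = (0 : ℝ)} ∧ B = Set.univ) ∨
     (A = Set.univ ∧ B = {y | inner ℝ v y = (0 : ℝ)}) ∨
     (A = {x | ∃ t : ℝ, x = t • v} ∧ B = {0})) ∧
    {x | T x = x} ≠ {0} ∧ ∀ x, T (T x) = T x := by
  have : Fact (finrank ℝ (EuclideanSpace ℝ (Fin 2)) = 2) := ⟨finrank_euclideanSpace_fin⟩
  obtain rfl : T = douglasRachford PA PB := funext hT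
  have hline : {x | ∃ t : ℝ, x = t • v} = (ℝ ∙ v : Set (EuclideanSpace ℝ (Fin 2))) := by
    ext x
    simp [Submodule.mem_span_singleton, eq_comm]
  have hperp : {y | inner ℝ v y = (0 : ℝ)} = ((ℝ ∙ v)ᗮ : Set (EuclideanSpace ℝ (Fin 2))) := by
    ext y
    exact Submodule.mem_orthogonal_singleton_iff_inner_right.symm
  rw [hline] at hker
  rw [hline, hperp]
  have hcases :=
    cones_eq_of_setOf_douglasRachford_eq_zero hPA hAconv hAcone hPB hBconv hBcone hv hker
  have hT := douglasRachford_eq_starProjection_orthogonal hPA hPB hcases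
  refine ⟨hcases, fun hfix => ?_, fun x => ?_⟩
  · obtain ⟨w, hw, hw0⟩ := exists_ne_zero_mem_orthogonal_span_singleton hv
    have hw' : w ∈ {x | douglasRachford PA PB x = x} := by
      rw [hT]
      exact Submodule.starProjection_eq_self_iff.2 hw
    exact hw0 (by rwa [hfix] at hw')
  · rw [hT]
    exact Submodule.starProjection_eq_self_iff.2 (Submodule.starProjection_apply_mem _ _)

/-- Let `A, B ⊆ ℝ²` be closed convex cones and suppose `Ker T_DR` is a line through the
origin, say `Ker T_DR = ℝ • v` with `v ≠ 0`.  Then either `A = {0}` and `B = Ker T_DR`,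
or `A = (Ker T_DR)^⊥` and `B = ℝ²`, or `A = ℝ²` and `B = (Ker T_DR)^⊥`, or
`A = Ker T_DR` and `B = {0}`.  Consequently `Fix T_DR ≠ {0}` and
`T_DR(ℝ²) ⊆ Fix T_DR`. -/
theorem stmt17 (A B : Set (EuclideanSpace ℝ (Fin 2)))
    (hAclosed : IsClosed A) (hAconv : Convex ℝ A)
    (hBclosed : IsClosed B) (hBconv : Convex ℝ B)
    (hAcone : ∀ x ∈ A, ∀ t : ℝ, 0 < t → t • x ∈ A)
    (hBcone : ∀ x ∈ B, ∀ t : ℝ, 0 < t → t • x ∈ B)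
    (PA PB T : EuclideanSpace ℝ (Fin 2) → EuclideanSpace ℝ (Fin 2))
    (hPA : ∀ x, PA x ∈ A ∧ ∀ w ∈ A, ‖x - PA x‖ ≤ ‖x - w‖)
    (hPB : ∀ x, PB x ∈ B ∧ ∀ w ∈ B, ‖x - PB x‖ ≤ ‖x - w‖)
    (hT : ∀ x, T x = (1 / 2 : ℝ) •
      (x + ((2 : ℝ) • PB ((2 : ℝ) • PA x - x) - ((2 : ℝ) • PA x - x))))
    (v : EuclideanSpace ℝ (Fin 2)) (hv : v ≠ 0)
    (hker : {x | T x = 0} = {x | ∃ t : ℝ, x = t • v}) :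
    ((A = {0} ∧ B = {x | ∃ t : ℝ, x = t • v}) ∨
     (A = {y | inner ℝ v y = (0 : ℝ)} ∧ B = Set.univ) ∨
     (A = Set.univ ∧ B = {y | inner ℝ v y = (0 : ℝ)}) ∨
     (A = {x | ∃ t : ℝ, x = t • v} ∧ B = {0})) ∧
    {x | T x = x} ≠ {0} ∧ ∀ x, T (T x) = T x :=
  stmt17_general A B hAconv hBconv hAcone hBcone PA PB T hPA hPB hT v hv hker
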